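/- The map (b, w2, w1) |-> (b^{-1}, b^{-1} w2, b^3 w1 - Σ_{j,k} λ_{jk} b^{2-j} w2^{j+k-1}) is inverse to the gluing map (a, v2, v1) |-> (a^{-1}, a^{-1} v2, a^3 v1 + Σ_{j,k} λ_{jk} a^{2-k} v2^{j+k-1}) on the locus where the first coordinate is invertible. -/

import Mathlib

/-!
Both maps send `a ↦ a⁻¹` and `v₂ ↦ a⁻¹ v₂`, so either composite fixes `a` and `v₂`; since an
algebra endomorphism of `K[a^{±1}, v₂, v₁]` is determined by the images of `a`, `v₂`, `v₁`, only
`v₁` remains. Composing, say, the forward map after the backward one, `a³` becomes `a⁻³`, which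
turns the forward correction `λ_{jk} a^{2-k} v₂^{j+k-1}` into `λ_{jk} a^{-1-k} v₂^{j+k-1}`, while
the backward correction `λ_{jk} a^{2-j} v₂^{j+k-1}` becomes `λ_{jk} a^{j-2-(j+k-1)} v₂^{j+k-1}`.
The two exponents agree as soon as `j + k ≥ 1`, so the corrections cancel and `v₁` is fixed.
-/

noncomputable section

open MvPolynomial LaurentPolynomial

/-- The ring `K[a^{±1}, v₂, v₁]` (equivalently `K[b^{±1}, w₂, w₁]`). -/
abbrev Rng (K : Type*) [Field K] := MvPolynomial (Fin 2) (LaurentPolynomial K)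

variable (K : Type*) [Field K]

/-- The first coordinate `a = C (T 1)` as a unit of `Rng K`. -/
def aUnit : (Rng K)ˣ :=
  Units.map (MvPolynomial.C : LaurentPolynomial K →+* Rng K).toMonoidHom
    (LaurentPolynomial.isUnit_T 1).unit

/-- The `K`-algebra map `K[a^{±1}] → Rng K` sending `T = a` to the unit `u`. -/
def laurentAlgHom (u : (Rng K)ˣ) : LaurentPolynomial K →ₐ[K] Rng K :=
  AddMonoidAlgebra.lift K (Rng K) ℤ ((Units.coeHom (Rng K)).comp (zpowersHom (Rng K)ˣ u))

/-- The substitution endomorphism of `K[a^{±1}, v₂, v₁]` sending `a ↦ u`, `v₂ ↦ x0`,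
`v₁ ↦ x1`. -/
def subst (u : (Rng K)ˣ) (x0 x1 : Rng K) : Rng K →ₐ[K] Rng K :=
  MvPolynomial.aevalTower (laurentAlgHom K u) ![x0, x1]

/-- The substitution given by the glue
`(a, v₂, v₁) ↦ (a⁻¹, a⁻¹v₂, a³v₁ + Σ λ_{jk} a^{2-k} v₂^{j+k-1})`. -/
def glueFwd (S : Finset (ℕ × ℕ)) (lam : ℕ × ℕ → K) : Rng K →ₐ[K] Rng K :=
  subst K (aUnit K)⁻¹ (MvPolynomial.C (T (-1)) * X 0)
    (MvPolynomial.C (T 3) * X 1 +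
      ∑ p ∈ S, lam p • (MvPolynomial.C (T (2 - (p.2 : ℤ))) * X 0 ^ (p.1 + p.2 - 1)))

/-- The substitution given by the inverse glue
`(b, w₂, w₁) ↦ (b⁻¹, b⁻¹w₂, b³w₁ - Σ λ_{jk} b^{2-j} w₂^{j+k-1})`. -/
def glueBwd (S : Finset (ℕ × ℕ)) (lam : ℕ × ℕ → K) : Rng K →ₐ[K] Rng K :=
  subst K (aUnit K)⁻¹ (MvPolynomial.C (T (-1)) * X 0)
    (MvPolynomial.C (T 3) * X 1 -
      ∑ p ∈ S, lam p • (MvPolynomial.C (T (2 - (p.1 : ℤ))) * X 0 ^ (p.1 + p.2 - 1)))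

theorem MvPolynomial.algHom_ext_of_C_T {R σ A : Type*} [CommSemiring R] [CommSemiring A]
    [Algebra R A] {f g : MvPolynomial σ R[T;T⁻¹] →ₐ[R] A}
    (hT : ∀ n : ℤ, f (C (T n)) = g (C (T n))) (hX : ∀ i, f (X i) = g (X i)) : f = g :=
  MvPolynomial.algHom_ext' (AddMonoidAlgebra.algHom_ext (fun n => hT n) (by ext)) hX

theorem LaurentPolynomial.val_isUnit_T_one_unit_zpow {R : Type*} [CommSemiring R] (n : ℤ) :
    (((isUnit_T 1).unit ^ n : R[T;T⁻¹]ˣ) : R[T;T⁻¹]) = T n := by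
  obtain ⟨m, rfl | rfl⟩ := n.eq_nat_or_neg
  · simp [T_pow]
  · rw [zpow_neg, zpow_natCast]
    apply Units.inv_eq_of_mul_eq_one_right
    rw [Units.val_pow_eq_pow_val, IsUnit.unit_spec, T_pow, ← T_add, mul_one, add_neg_cancel,
      T_zero]

section

variable {K}

theorem val_aUnit_zpow (n : ℤ) :
    ((aUnit K ^ n : (Rng K)ˣ) : Rng K) = MvPolynomial.C (T n) := by
  rw [aUnit, ← map_zpow, Units.coe_map, val_isUnit_T_one_unit_zpow]
  rfl

theorem subst_C_T (u : (Rng K)ˣ) (x0 x1 : Rng K) (n : ℤ) :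
    subst K u x0 x1 (MvPolynomial.C (T n)) = ((u ^ n : (Rng K)ˣ) : Rng K) := by
  rw [subst, aevalTower_C, laurentAlgHom, T, AddMonoidAlgebra.lift_single, one_smul]
  rfl

theorem subst_X_zero (u : (Rng K)ˣ) (x0 x1 : Rng K) : subst K u x0 x1 (X 0) = x0 := by
  simp [subst]

theorem subst_X_one (u : (Rng K)ˣ) (x0 x1 : Rng K) : subst K u x0 x1 (X 1) = x1 := by
  simp [subst]

def glueMap (x1 : Rng K) : Rng K →ₐ[K] Rng K :=
  subst K (aUnit K)⁻¹ (MvPolynomial.C (T (-1)) * X 0) x1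

def correction (S : Finset (ℕ × ℕ)) (c : ℕ × ℕ → K) (e : ℕ × ℕ → ℤ) : Rng K :=
  ∑ p ∈ S, c p • (MvPolynomial.C (T (e p)) * X 0 ^ (p.1 + p.2 - 1))

theorem glueMap_C_T (x1 : Rng K) (n : ℤ) :
    glueMap x1 (MvPolynomial.C (T n)) = MvPolynomial.C (T (-n)) := by
  rw [glueMap, subst_C_T, inv_zpow', val_aUnit_zpow]

theorem glueMap_X_zero (x1 : Rng K) : glueMap x1 (X 0) = MvPolynomial.C (T (-1)) * X 0 :=
  subst_X_zero _ _ _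

theorem glueMap_X_one (x1 : Rng K) : glueMap x1 (X 1) = x1 :=
  subst_X_one _ _ _

theorem C_T_mul_C_T_mul (m n : ℤ) (x : Rng K) :
    MvPolynomial.C (T m) * (MvPolynomial.C (T n) * x) = MvPolynomial.C (T (m + n)) * x := by
  rw [← mul_assoc, ← map_mul, ← T_add]

theorem glueMap_C_T_mul_X_zero_pow (x1 : Rng K) (m : ℤ) (k : ℕ) :
    glueMap x1 (MvPolynomial.C (T m) * X 0 ^ k) = MvPolynomial.C (T (-m - k)) * X 0 ^ k := by
  rw [map_mul, map_pow, glueMap_C_T, glueMap_X_zero, mul_pow, ← map_pow, T_pow,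
    C_T_mul_C_T_mul]
  congr 3
  ring

theorem glueMap_correction (x1 : Rng K) (S : Finset (ℕ × ℕ)) (c : ℕ × ℕ → K)
    (e : ℕ × ℕ → ℤ) :
    glueMap x1 (correction S c e) = correction S c (fun p => -e p - (p.1 + p.2 - 1 : ℕ)) := by
  simp only [correction, map_sum, map_smul, glueMap_C_T_mul_X_zero_pow]

theorem C_T_mul_correction (m : ℤ) (S : Finset (ℕ × ℕ)) (c : ℕ × ℕ → K) (e : ℕ × ℕ → ℤ) :
    MvPolynomial.C (T m) * correction S c e = correction S c (fun p => m + e p) := by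
  simp only [correction, Finset.mul_sum, mul_smul_comm, C_T_mul_C_T_mul]

theorem correction_neg (S : Finset (ℕ × ℕ)) (c : ℕ × ℕ → K) (e : ℕ × ℕ → ℤ) :
    correction S (-c) e = -correction S c e := by
  simp only [correction, Pi.neg_apply, neg_smul, Finset.sum_neg_distrib]

theorem correction_congr {S : Finset (ℕ × ℕ)} {c : ℕ × ℕ → K} {e e' : ℕ × ℕ → ℤ}
    (h : ∀ p ∈ S, c p ≠ 0 → e p = e' p) : correction S c e = correction S c e' := by
  refine Finset.sum_congr rfl fun p hp => ?_
  rcases eq_or_ne (c p) 0 with hc | hc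
  · rw [hc, zero_smul, zero_smul]
  · rw [h p hp hc]

theorem glueMap_comp_glueMap (S : Finset (ℕ × ℕ)) (c : ℕ × ℕ → K) (e e' : ℕ × ℕ → ℤ)
    (h : ∀ p ∈ S, c p ≠ 0 → e p + e' p = 3 - (p.1 + p.2 - 1 : ℕ)) :
    (glueMap (MvPolynomial.C (T 3) * X 1 + correction S c e)).comp
      (glueMap (MvPolynomial.C (T 3) * X 1 - correction S c e')) = AlgHom.id K (Rng K) := by
  refine MvPolynomial.algHom_ext_of_C_T (fun n => ?_) (Fin.forall_fin_two.2 ⟨?_, ?_⟩) <;>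
    simp only [AlgHom.comp_apply, AlgHom.id_apply]
  · rw [glueMap_C_T, glueMap_C_T, neg_neg]
  · rw [glueMap_X_zero, map_mul, glueMap_C_T, glueMap_X_zero, C_T_mul_C_T_mul]
    norm_num
  · have hcorr : correction S c (fun p => -3 + e p)
        = correction S c (fun p => -e' p - (p.1 + p.2 - 1 : ℕ)) :=
      correction_congr fun p hp hc => by linarith [h p hp hc]
    rw [glueMap_X_one, map_sub, map_mul, glueMap_C_T, glueMap_X_one, mul_add, C_T_mul_C_T_mul,
      C_T_mul_correction, glueMap_correction, hcorr, add_sub_cancel_right]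
    norm_num

end

theorem stmt7 (S : Finset (ℕ × ℕ)) (lam : ℕ × ℕ → K)
    (h00 : lam (0, 0) = 0) :
    (glueFwd K S lam).comp (glueBwd K S lam) = AlgHom.id K (Rng K) ∧
    (glueBwd K S lam).comp (glueFwd K S lam) = AlgHom.id K (Rng K) := by
  have hdeg : ∀ p ∈ S, lam p ≠ 0 → ((p.1 + p.2 - 1 : ℕ) : ℤ) = p.1 + p.2 - 1 := by
    rintro ⟨j, k⟩ - hp
    have hjk : (j, k) ≠ (0, 0) := fun h => hp (h ▸ h00)
    simp only [ne_eq, Prod.mk.injEq] at hjk ⊢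
    omega
  have hfwd : glueFwd K S lam
      = glueMap (MvPolynomial.C (T 3) * X 1 + correction S lam fun p => 2 - p.2) := rfl
  have hbwd : glueBwd K S lam
      = glueMap (MvPolynomial.C (T 3) * X 1 - correction S lam fun p => 2 - p.1) := rfl
  constructor
  · rw [hfwd, hbwd]
    exact glueMap_comp_glueMap S lam _ _ fun p hp hc => by linarith [hdeg p hp hc]
  · rw [hfwd, hbwd, ← sub_neg_eq_add, ← correction_neg, sub_eq_add_neg (_ * _), ← correction_neg]
    exact glueMap_comp_glueMap S (-lam) _ _ fun p hp hc => by
      linarith [hdeg p hp (neg_ne_zero.1 hc)]
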